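/- arXiv:1409.7987 — 3 statements merged into one kernel-verified Lean document; each statement's English description precedes it below -/
import Mathlib

section
/- Let d = p^n with p an odd prime, and let G ∈ GL(2, F_d) satisfy tr(G)² − 4·det(G) = 0. Then G^d is a scalar multiple of the identity matrix. -/
/-- If `G ∈ GL(2, F_d)` (`d = p^n`, `p` odd) has vanishing discriminant
`tr(G)² - 4 det(G) = 0`, then `G^d` is a scalar multiple of the identity. -/
theorem stmt_11 (p n : ℕ) [Fact p.Prime] (hp : Odd p) (hn : n ≠ 0)
    (G : Matrix (Fin 2) (Fin 2) (GaloisField p n)) (hG : IsUnit G.det)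
    (hdisc : G.trace ^ 2 - 4 * G.det = 0) :
    ∃ c : GaloisField p n,
      G ^ (p ^ n) = c • (1 : Matrix (Fin 2) (Fin 2) (GaloisField p n)) := by
  classical
  have h2 : (2 : GaloisField p n) ≠ 0 := by
    intro h
    have hdvd : (p : ℕ) ∣ 2 := by
      exact_mod_cast (CharP.cast_eq_zero_iff (GaloisField p n) p 2).mp (by exact_mod_cast h)
    have hp2 : p = 2 := (Nat.prime_dvd_prime_iff_eq Fact.out Nat.prime_two).mp hdvd
    rw [hp2] at hp
    simp [Nat.odd_iff] at hp
  have h4 : (4 : GaloisField p n) ≠ 0 := by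
    have := mul_ne_zero h2 h2
    norm_num at this ⊢
    exact this
  set l : GaloisField p n := G.trace / 2 with hl
  have hl2 : l * 2 = G 0 0 + G 1 1 := by
    rw [hl, Matrix.trace_fin_two]
    exact div_mul_cancel₀ _ h2
  have hd : (G 0 0 + G 1 1) ^ 2 = 4 * (G 0 0 * G 1 1 - G 0 1 * G 1 0) := by
    rw [Matrix.trace_fin_two, Matrix.det_fin_two] at hdisc
    linear_combination hdisc
  have hll : l * l = G 0 0 * G 1 1 - G 0 1 * G 1 0 := by
    have h44 : (4 : GaloisField p n) * (l * l)
        = 4 * (G 0 0 * G 1 1 - G 0 1 * G 1 0) := by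
      calc (4 : GaloisField p n) * (l * l) = (l * 2) * (l * 2) := by ring
        _ = (G 0 0 + G 1 1) * (G 0 0 + G 1 1) := by rw [hl2]
        _ = 4 * (G 0 0 * G 1 1 - G 0 1 * G 1 0) := by linear_combination hd
    exact mul_left_cancel₀ h4 h44
  set N : Matrix (Fin 2) (Fin 2) (GaloisField p n) := G - l • 1 with hN
  have hN2 : N * N = 0 := by
    ext i j
    fin_cases i <;> fin_cases j <;>
      simp [hN, Matrix.mul_apply, Fin.sum_univ_two, Matrix.one_apply]
    · linear_combination hll - G 0 0 * hl2
    · linear_combination (-(G 0 1)) * hl2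
    · linear_combination (-(G 1 0)) * hl2
    · linear_combination hll - G 1 1 * hl2
  have hq2 : 2 ≤ p ^ n := le_trans (Fact.out : p.Prime).two_le (Nat.le_self_pow hn p)
  have hNq : N ^ (p ^ n) = 0 := by
    obtain ⟨k, hk⟩ : ∃ k, p ^ n = 2 + k := ⟨p ^ n - 2, by omega⟩
    rw [hk, pow_add, pow_two, hN2, zero_mul]
  have hcomm : Commute (l • (1 : Matrix (Fin 2) (Fin 2) (GaloisField p n))) N :=
    (Commute.one_left N).smul_left l
  have hGdec : G = l • 1 + N := by rw [hN]; abel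
  refine ⟨l ^ (p ^ n), ?_⟩
  calc G ^ (p ^ n) = (l • 1 + N) ^ (p ^ n) := by rw [← hGdec]
    _ = (l • (1 : Matrix (Fin 2) (Fin 2) (GaloisField p n))) ^ (p ^ n) + N ^ (p ^ n) :=
        add_pow_char_pow_of_commute p n hcomm
    _ = l ^ (p ^ n) • 1 := by rw [hNq, add_zero, smul_pow, one_pow]
end

section
/- Let d = p^n with p an odd prime and n even, and let G ∈ GL(2, F_d) have irreducible characteristic polynomial over F_d and determinant in the prime field F_p. Then G^{(d+1)/2} is a scalar multiple of the identity. Consequently the induced Möbius transformation on the projective line over F_d has order at most (d+1)/2 and cannot cycle through all d+1 points. -/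
open Polynomial in

lemma core_dvd {F : Type*} [Field F] [Fintype F] {p n : ℕ} [Fact p.Prime] [CharP F p]
    (hodd : Odd p) (hcard : Fintype.card F = p ^ n)
    (T D s : F) (hs : s ^ 2 = D)
    (hirr : ∀ x : F, x ^ 2 - T * x + D ≠ 0) :
    ∃ c : F, (X ^ 2 - C T * X + C D : F[X]) ∣ X ^ ((Fintype.card F + 1) / 2) - C c := by
  classical
  have hq1 : 1 < Fintype.card F := Fintype.one_lt_card
  have hqodd : Odd (Fintype.card F) := by rw [hcard]; exact Odd.pow hodd
  set f : F[X] := X ^ 2 - C T * X + C D with hf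
  have hfm : f.Monic := by unfold f; monicity!
  have hdeg : f.natDegree = 2 := by unfold f; compute_degree!
  have heval : ∀ x : F, f.eval x = x ^ 2 - T * x + D := by intro x; simp [hf]
  have hroots : f.roots = 0 := by
    rw [Multiset.eq_zero_iff_forall_notMem]
    intro x hx
    rw [mem_roots hfm.ne_zero, IsRoot.def, heval] at hx
    exact hirr x hx
  have hfirr : Irreducible f :=
    (hfm.irreducible_iff_roots_eq_zero_of_degree_le_three (by omega) (by omega)).mpr hroots
  haveI : Fact (Irreducible f) := ⟨hfirr⟩
  have haf : aeval (AdjoinRoot.root f) f = 0 := by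
    rw [AdjoinRoot.aeval_eq, AdjoinRoot.mk_self]
  set L := AdjoinRoot f with hL
  set α : L := AdjoinRoot.root f with hαdef
  set TL := algebraMap F L T with hTL
  set DL := algebraMap F L D with hDL
  have hα : α ^ 2 = TL * α - DL := by
    simp only [hf, map_add, map_sub, map_mul, map_pow, aeval_X, aeval_C] at haf
    linear_combination haf
  haveI : CharP L p := charP_of_injective_algebraMap (algebraMap F L).injective p
  have hfix : ∀ a : F, (algebraMap F L a) ^ Fintype.card F = algebraMap F L a := by
    intro a
    rw [← map_pow, FiniteField.pow_card]
  have hαq : (α ^ Fintype.card F) ^ 2 = TL * α ^ Fintype.card F - DL := by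
    have h1 : (α ^ 2) ^ Fintype.card F = (TL * α - DL) ^ Fintype.card F :=
      congrArg (· ^ Fintype.card F) hα
    rw [hcard, sub_pow_char_pow, mul_pow, ← hcard, hfix, hfix] at h1
    rw [pow_right_comm] at h1
    exact h1
  have hfactor : ∀ y : L, y ^ 2 = TL * y - DL → y = α ∨ y = TL - α := by
    intro y hy
    have h0 : (y - α) * (y - (TL - α)) = 0 := by linear_combination hy - hα
    rcases mul_eq_zero.mp h0 with h | h
    · exact Or.inl (by linear_combination h)
    · exact Or.inr (by linear_combination h)
  have hne : α ^ Fintype.card F ≠ α := by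
    intro hcontra
    have hmin : f = minpoly F α := minpoly.eq_of_irreducible_of_monic hfirr haf hfm
    have hdvd : f ∣ (X ^ Fintype.card F - X : F[X]) := by
      rw [hmin]
      apply minpoly.dvd
      rw [map_sub, map_pow, aeval_X, sub_eq_zero]
      exact hcontra
    obtain ⟨g, hg⟩ := hdvd
    have hXq_ne : (X ^ Fintype.card F - X : F[X]) ≠ 0 :=
      FiniteField.X_pow_card_sub_X_ne_zero F hq1
    have hgne : g ≠ 0 := by rintro rfl; rw [mul_zero] at hg; exact hXq_ne hg
    have hdegXq : (X ^ Fintype.card F - X : F[X]).natDegree = Fintype.card F :=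
      FiniteField.X_pow_card_sub_X_natDegree_eq F hq1
    have hdegg : g.natDegree = Fintype.card F - 2 := by
      have := congrArg Polynomial.natDegree hg
      rw [hdegXq, natDegree_mul hfm.ne_zero hgne, hdeg] at this
      omega
    have hallroots : ∀ a : F, g.IsRoot a := by
      intro a
      have h1 : (X ^ Fintype.card F - X : F[X]).eval a = 0 := by
        simp [sub_eq_zero, FiniteField.pow_card]
      rw [hg, eval_mul] at h1
      rcases mul_eq_zero.mp h1 with h | h
      · exact absurd (by rw [heval a] at h; exact h) (hirr a)
      · exact h
    have hsub : Finset.univ ⊆ g.roots.toFinset := by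
      intro a _
      rw [Multiset.mem_toFinset, mem_roots hgne]
      exact hallroots a
    have hle : Fintype.card F ≤ g.roots.toFinset.card := by
      calc Fintype.card F = Finset.univ.card := (Finset.card_univ (α := F)).symm
      _ ≤ g.roots.toFinset.card := Finset.card_le_card hsub
    have hle2 : g.roots.toFinset.card ≤ g.natDegree :=
      le_trans (Multiset.toFinset_card_le _) (Polynomial.card_roots' g)
    omega
  have hconj : α ^ Fintype.card F = TL - α := (hfactor _ hαq).resolve_left hne
  have hnorm : α ^ (Fintype.card F + 1) = DL := by
    rw [pow_succ, hconj]
    linear_combination -hα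
  -- now extract the scalar
  have hk2 : (Fintype.card F + 1) / 2 * 2 = Fintype.card F + 1 := by
    obtain ⟨t, ht⟩ := hqodd; omega
  set k := (Fintype.card F + 1) / 2 with hk
  set sL := algebraMap F L s with hsL
  have hβ : (α ^ k) ^ 2 = sL ^ 2 := by
    rw [← pow_mul, hk2, hnorm, hsL, ← map_pow, hs]
  have h0 : (α ^ k - sL) * (α ^ k + sL) = 0 := by linear_combination hβ
  have key : ∃ c : F, α ^ k = algebraMap F L c := by
    rcases mul_eq_zero.mp h0 with h | h
    · exact ⟨s, by linear_combination h⟩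
    · exact ⟨-s, by rw [map_neg]; linear_combination h⟩
  obtain ⟨c, hc⟩ := key
  refine ⟨c, ?_⟩
  rw [← AdjoinRoot.mk_eq_zero]
  rw [map_sub, map_pow, AdjoinRoot.mk_X]
  rw [sub_eq_zero, ← hαdef, hc]
  rw [AdjoinRoot.algebraMap_eq]
  exact (AdjoinRoot.mk_C c).symm

open Polynomial in
private lemma sqrt_of_prime_field (p n : ℕ) [Fact p.Prime] (hp : Odd p) (hn : n ≠ 0)
    (hneven : Even n) (D : GaloisField p n) (hD : D ≠ 0)
    (hdet : D ∈ Set.range (algebraMap (ZMod p) (GaloisField p n))) :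
    ∃ s : GaloisField p n, s ^ 2 = D := by
  haveI : Fintype (GaloisField p n) := Fintype.ofFinite _
  have hcard : Fintype.card (GaloisField p n) = p ^ n := by
    rw [← Nat.card_eq_fintype_card, GaloisField.card p n hn]
  obtain ⟨c₀, hc₀⟩ := hdet
  have hc₀ne : c₀ ≠ 0 := by
    rintro rfl; simp at hc₀; exact hD hc₀.symm
  have hqodd : Odd (p ^ n) := Odd.pow hp
  obtain ⟨m, hm⟩ := hneven
  obtain ⟨k, hk⟩ := hp
  have hp1 : 1 < p := (Fact.out : p.Prime).one_lt
  have h1 : p ^ 2 - 1 ∣ p ^ n - 1 := by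
    have := Nat.sub_dvd_pow_sub_pow (p ^ 2) 1 m
    simpa [one_pow, ← pow_mul, hm, two_mul] using this
  have h2 : 2 * (p - 1) ∣ p ^ 2 - 1 := by
    refine ⟨k + 1, ?_⟩
    have e1 : p ^ 2 = 2 * (2 * k) * (k + 1) + 1 := by subst hk; ring
    have e2 : p - 1 = 2 * k := by omega
    rw [e2]
    omega
  have h3 : 2 * (p - 1) ∣ p ^ n - 1 := h2.trans h1
  obtain ⟨j, hj⟩ := h3
  have hj' : p ^ n - 1 = 2 * ((p - 1) * j) := by rw [hj]; ring
  have hq1 : 1 < p ^ n := Nat.one_lt_pow hn hp1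
  have hDpow : D ^ (Fintype.card (GaloisField p n) / 2) = 1 := by
    have hcd : Fintype.card (GaloisField p n) / 2 = (p - 1) * j := by
      rw [hcard]
      obtain ⟨t, ht⟩ := hqodd
      omega
    rw [hcd, ← hc₀, ← map_pow, pow_mul, ZMod.pow_card_sub_one_eq_one hc₀ne, one_pow, map_one]
  have hchar : ringChar (GaloisField p n) ≠ 2 := by
    have : ringChar (GaloisField p n) = p := ringChar.eq _ p
    omega
  obtain ⟨s, hs⟩ := (FiniteField.isSquare_iff hchar hD).mpr hDpow
  exact ⟨s, by rw [hs, sq]⟩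

open Polynomial in
/-- Let `d = p^n` with `p` an odd prime and `n` even.  If `G ∈ GL(2, F_d)` has
irreducible characteristic polynomial over `F_d` (no root in `F_d`) and
determinant in the prime subfield `F_p`, then `G^{(d+1)/2}` is a scalar
multiple of the identity; consequently the smallest positive `m` with `G^m`
scalar is at most `(d+1)/2 < d+1`, so `G` cannot cycle through all `d+1`
points of the projective line. -/
theorem stmt_15 (p n : ℕ) [Fact p.Prime] (hp : Odd p) (hn : n ≠ 0)
    (hneven : Even n)
    (G : Matrix (Fin 2) (Fin 2) (GaloisField p n)) (hG : IsUnit G.det)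
    (hdet : G.det ∈ Set.range (algebraMap (ZMod p) (GaloisField p n)))
    (hirr : ∀ x : GaloisField p n, x ^ 2 - G.trace * x + G.det ≠ 0) :
    (∃ c : GaloisField p n,
        G ^ ((p ^ n + 1) / 2) = c • (1 : Matrix (Fin 2) (Fin 2) (GaloisField p n))) ∧
      sInf {m : ℕ | 0 < m ∧ ∃ c : GaloisField p n,
          G ^ m = c • (1 : Matrix (Fin 2) (Fin 2) (GaloisField p n))}
        ≤ (p ^ n + 1) / 2 := by
  have main : ∃ c : GaloisField p n,
      G ^ ((p ^ n + 1) / 2) = c • (1 : Matrix (Fin 2) (Fin 2) (GaloisField p n)) := by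
    haveI : Fintype (GaloisField p n) := Fintype.ofFinite _
    have hcard : Fintype.card (GaloisField p n) = p ^ n := by
      rw [← Nat.card_eq_fintype_card, GaloisField.card p n hn]
    obtain ⟨s, hs⟩ := sqrt_of_prime_field p n hp hn hneven G.det hG.ne_zero hdet
    obtain ⟨c, hdvd⟩ := core_dvd hp hcard G.trace G.det s hs hirr
    rw [hcard] at hdvd
    obtain ⟨r, hr⟩ := hdvd
    -- Cayley-Hamilton for 2x2
    have hCH0 : G ^ 2 - G.trace • G + G.det • (1 : Matrix (Fin 2) (Fin 2) (GaloisField p n))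
        = 0 := by
      have h2 : G ^ 2 = G * G := sq G
      ext i j
      fin_cases i <;> fin_cases j <;>
        simp [h2, Matrix.mul_apply, Matrix.trace_fin_two, Matrix.det_fin_two, Fin.sum_univ_two,
          Matrix.one_apply] <;> ring
    have hCH : aeval G (X ^ 2 - C G.trace * X + C G.det) = 0 := by
      have hsm : (algebraMap (GaloisField p n) (Matrix (Fin 2) (Fin 2) (GaloisField p n)))
          G.trace * G = G.trace • G := by
        rw [Algebra.algebraMap_eq_smul_one, smul_mul_assoc, one_mul]
      simp only [map_add, map_sub, map_mul, map_pow, aeval_X, aeval_C, hsm,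
        Algebra.algebraMap_eq_smul_one]
      rw [smul_mul_assoc, one_mul]
      exact hCH0
    have := congrArg (aeval G) hr
    rw [map_mul, hCH, zero_mul, map_sub, map_pow, aeval_X, aeval_C,
      Algebra.algebraMap_eq_smul_one, sub_eq_zero] at this
    exact ⟨c, this⟩
  refine ⟨main, ?_⟩
  apply Nat.sInf_le
  refine ⟨?_, main⟩
  have hp1 : 1 < p := (Fact.out : p.Prime).one_lt
  have : 1 ≤ p ^ n := Nat.one_le_pow _ _ (by omega)
  omega
end

section
/- Let d = p^n with p an odd prime and n odd. Let η be an element of order (p−1)(d+1) in F_{d^2}^×, and let G ∈ GL(2, F_d) have eigenvalues η^r and η^{dr} with r not a multiple of (d+1)/2. Then the smallest positive integer m such that G^m is a scalar multiple of the identity equals d+1 if and only if gcd(r, d+1) = 1. -/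
open Polynomial Matrix

/-- Let `d = p^n` with `p` an odd prime and `n` odd.  Let `η ∈ F_{d²}ˣ` have
order `(p-1)(d+1)`, and let `G` be an invertible `2×2` matrix with entries in
the subfield `F_d` of `F_{d²}` whose eigenvalues are `η^r` and `η^{dr}`, with
`r` not a multiple of `(d+1)/2`.  Then the smallest positive `m` such that
`G^m` is a scalar multiple of the identity equals `d+1` iff `gcd(r, d+1) = 1`. -/
theorem stmt_16 (p n : ℕ) [Fact p.Prime] (hp : Odd p) (hnodd : Odd n)
    (η : (GaloisField p (2 * n))ˣ) (hη : orderOf η = (p - 1) * (p ^ n + 1))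
    (G : Matrix (Fin 2) (Fin 2) (GaloisField p (2 * n)))
    (hGent : ∀ i j, (G i j) ^ (p ^ n) = G i j)
    (hG : IsUnit G.det)
    (r : ℕ) (hr : ¬ ((p ^ n + 1) / 2 ∣ r))
    (hsum : ((η ^ r : (GaloisField p (2 * n))ˣ) : GaloisField p (2 * n)) +
        ((η ^ (p ^ n * r) : (GaloisField p (2 * n))ˣ) : GaloisField p (2 * n)) = G.trace)
    (hprod : ((η ^ r : (GaloisField p (2 * n))ˣ) : GaloisField p (2 * n)) *
        ((η ^ (p ^ n * r) : (GaloisField p (2 * n))ˣ) : GaloisField p (2 * n)) = G.det) :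
    sInf {m : ℕ | 0 < m ∧ ∃ c : GaloisField p (2 * n),
        G ^ m = c • (1 : Matrix (Fin 2) (Fin 2) (GaloisField p (2 * n)))}
      = p ^ n + 1 ↔ Nat.gcd r (p ^ n + 1) = 1 := by
  have hp2 : 2 ≤ p := (Fact.out : p.Prime).two_le
  set d : ℕ := p ^ n with hdd
  have hd1 : 1 ≤ d := Nat.one_le_pow _ _ (by omega)
  have hdodd : Odd d := hp.pow
  set D : ℕ := d + 1 with hD
  set e : ℕ := p - 1 with he
  have he0 : 0 < e := by omega
  set k : ℕ := ∑ i ∈ Finset.range n, p ^ i with hk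
  -- e * k = d - 1
  have hek : e * k = d - 1 := by
    have hz : ((∑ i ∈ Finset.range n, p ^ i : ℕ) : ℤ) * ((p : ℤ) - 1) = (p : ℤ) ^ n - 1 := by
      push_cast
      exact geom_sum_mul (p : ℤ) n
    have hcast : ((e * k : ℕ) : ℤ) = ((d - 1 : ℕ) : ℤ) := by
      push_cast [Nat.cast_sub (by omega : 1 ≤ p), Nat.cast_sub hd1, hdd]
      rw [mul_comm]
      rw [hk, he, Nat.cast_sub (by omega : 1 ≤ p), Nat.cast_sub (Nat.one_le_pow _ _ (by omega))]
      exact_mod_cast hz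
    exact_mod_cast hcast
  -- k is odd
  have hkodd : Odd k := by
    rw [Nat.odd_iff] at *
    rw [hk, Finset.sum_nat_mod]
    have hterm : ∀ i ∈ Finset.range n, p ^ i % 2 = 1 % 2 := by
      intro i _
      have hoi : Odd (p ^ i) := (Nat.odd_iff.mpr hp).pow
      rw [Nat.odd_iff] at hoi
      simp [hoi]
    rw [Finset.sum_congr rfl hterm]
    simpa using hnodd
  -- k coprime to D
  have hkD : Nat.Coprime k D := by
    have h1 : Nat.gcd k D ∣ d - 1 := dvd_trans (Nat.gcd_dvd_left k D) ⟨e, by rw [← hek]; ring⟩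
    have h2 : Nat.gcd k D ∣ 2 := by
      have hsub := Nat.dvd_sub (Nat.gcd_dvd_right k D) h1
      have heq : D - (d - 1) = 2 := by omega
      rwa [heq] at hsub
    rcases (Nat.dvd_prime Nat.prime_two).mp h2 with h | h
    · exact h
    · exfalso
      have hdk := Nat.gcd_dvd_left k D
      rw [h] at hdk
      rw [Nat.odd_iff] at hkodd
      omega
  set g : ℕ := Nat.gcd r D with hg
  have hgD : g ∣ D := Nat.gcd_dvd_right r D
  have hg0 : 0 < g := Nat.gcd_pos_of_pos_right _ (by omega)
  set D' : ℕ := D / g with hD'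
  have hgD' : g * D' = D := Nat.mul_div_cancel' hgD
  have hD'0 : 0 < D' := Nat.div_pos (Nat.le_of_dvd (by omega) hgD) hg0
  -- key divisibility equivalence : D ∣ r * m ↔ D' ∣ m
  have hrdvd : ∀ m : ℕ, D ∣ r * m ↔ D' ∣ m := by
    intro m
    have hrg : g * (r / g) = r := Nat.mul_div_cancel' (Nat.gcd_dvd_left r D)
    have hcop : Nat.Coprime (r / g) D' := Nat.coprime_div_gcd_div_gcd hg0
    constructor
    · intro h
      rw [← hgD', ← hrg] at h
      have h' : g * D' ∣ g * (r / g * m) := by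
        rwa [mul_assoc] at h
      have h'' := (Nat.mul_dvd_mul_iff_left hg0).mp h'
      exact Nat.Coprime.dvd_of_dvd_mul_left hcop.symm h''
    · intro h
      rw [← hgD', ← hrg, mul_assoc]
      exact Nat.mul_dvd_mul_left g (Dvd.dvd.mul_left h (r / g))
  -- order divisibility equivalence
  have horder : ∀ m : ℕ, orderOf η ∣ d * (r * m) - r * m ↔ D' ∣ m := by
    intro m
    have h1 : d * (r * m) - r * m = e * (r * m * k) := by
      have h2 : e * (r * m * k) = r * m * (e * k) := by ring
      rw [h2, hek, Nat.mul_sub, mul_one]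
      ring_nf
    rw [h1, hη]
    constructor
    · intro h
      have h' : e * D ∣ e * (r * m * k) := h
      have h'' := (Nat.mul_dvd_mul_iff_left he0).mp h'
      have hDrm : D ∣ r * m := Nat.Coprime.dvd_of_dvd_mul_right hkD.symm h''
      exact (hrdvd m).mp hDrm
    · intro h
      have hDrm : D ∣ r * m := (hrdvd m).mpr h
      exact (Nat.mul_dvd_mul_iff_left he0).mpr (Dvd.dvd.mul_right hDrm k)
  -- the eigenvalues
  set a : GaloisField p (2 * n) := ((η ^ r : (GaloisField p (2 * n))ˣ) : GaloisField p (2 * n))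
    with ha
  set b : GaloisField p (2 * n) :=
    ((η ^ (d * r) : (GaloisField p (2 * n))ˣ) : GaloisField p (2 * n)) with hb
  -- a^m = b^m ↔ D' ∣ m
  have habm : ∀ m : ℕ, a ^ m = b ^ m ↔ D' ∣ m := by
    intro m
    have h1 : a ^ m = ((η ^ (r * m) : (GaloisField p (2 * n))ˣ) :
        GaloisField p (2 * n)) := by
      rw [ha, ← Units.val_pow_eq_pow_val, ← pow_mul]
    have h2 : b ^ m = ((η ^ (d * (r * m)) : (GaloisField p (2 * n))ˣ) :
        GaloisField p (2 * n)) := by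
      rw [hb, ← Units.val_pow_eq_pow_val, ← pow_mul, mul_assoc]
    rw [h1, h2]
    rw [show (((η ^ (r * m) : (GaloisField p (2 * n))ˣ) : GaloisField p (2 * n)) =
        ((η ^ (d * (r * m)) : (GaloisField p (2 * n))ˣ) : GaloisField p (2 * n))) ↔
        (η ^ (r * m) = η ^ (d * (r * m))) from ⟨fun h => Units.ext h, fun h => by rw [h]⟩]
    rw [pow_eq_pow_iff_modEq, Nat.modEq_iff_dvd' (Nat.le_mul_of_pos_left _ (by omega))]
    exact horder m
  -- a ≠ b
  have hab : a ≠ b := by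
    intro h
    have h1 : a ^ 1 = b ^ 1 := by simpa using h
    have h2 : D' ∣ 1 := (habm 1).mp h1
    have h3 : D' = 1 := Nat.dvd_one.mp h2
    have h4 : g = D := by rw [← hgD', h3, mul_one]
    have h5 : D ∣ r := by
      rw [← h4]
      exact Nat.gcd_dvd_left r D
    have h6 : D / 2 ∣ D := Nat.div_dvd_of_dvd (by rw [Nat.odd_iff] at hdodd; omega)
    exact hr (dvd_trans h6 h5)
  -- trace and det in terms of a, b
  have hsum' : G 0 0 + G 1 1 = a + b := by
    rw [Matrix.trace_fin_two] at hsum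
    rw [← hsum, ha, hb, mul_comm d r]
  have hprod' : G 0 0 * G 1 1 - G 0 1 * G 1 0 = a * b := by
    rw [Matrix.det_fin_two] at hprod
    rw [← hprod, ha, hb, mul_comm d r]
  -- Cayley–Hamilton style identity
  have hCH : (G - a • (1 : Matrix (Fin 2) (Fin 2) (GaloisField p (2 * n)))) *
      (G - b • (1 : Matrix (Fin 2) (Fin 2) (GaloisField p (2 * n)))) = 0 := by
    ext i j
    fin_cases i <;> fin_cases j <;>
      simp [Matrix.mul_apply, Fin.sum_univ_two, Matrix.sub_apply, Matrix.smul_apply,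
        Matrix.one_apply] <;>
      first
        | linear_combination G 0 0 * hsum' - hprod'
        | linear_combination G 0 1 * hsum'
        | linear_combination G 1 0 * hsum'
        | linear_combination G 1 1 * hsum'
        | linear_combination hprod'
        | linear_combination -hprod'
        | linear_combination G 1 1 * hsum' - hprod'
        | linear_combination -(G 1 1) * hsum' + hprod'
        | linear_combination G 0 0 * hsum' + hprod'
        | linear_combination G 1 1 * hsum' + hprod'
        | linear_combination -(G 0 0) * hsum' - hprod'
        | linear_combination -(G 1 1) * hsum' - hprod'
        | linear_combination -(G 0 0) * hsum' + hprod'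
        | linear_combination -(G 1 1) * hsum' + hprod'
        | linear_combination -(G 0 1) * hsum'
        | linear_combination -(G 1 0) * hsum'
  -- eigenvectors
  have heig : ∀ x : GaloisField p (2 * n),
      (G - x • (1 : Matrix (Fin 2) (Fin 2) (GaloisField p (2 * n)))).det = 0 →
      ∃ v : Fin 2 → GaloisField p (2 * n), v ≠ 0 ∧ G *ᵥ v = x • v := by
    intro x hx
    obtain ⟨v, hv0, hv⟩ := Matrix.exists_mulVec_eq_zero_iff.mpr hx
    refine ⟨v, hv0, ?_⟩
    rwa [Matrix.sub_mulVec, Matrix.smul_mulVec, Matrix.one_mulVec, sub_eq_zero] at hv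
  have hdeta : (G - a • (1 : Matrix (Fin 2) (Fin 2) (GaloisField p (2 * n)))).det = 0 := by
    simp only [Matrix.det_fin_two, Matrix.sub_apply, Matrix.smul_apply, Matrix.one_apply,
      smul_eq_mul]
    norm_num
    linear_combination hprod' - a * hsum'
  have hdetb : (G - b • (1 : Matrix (Fin 2) (Fin 2) (GaloisField p (2 * n)))).det = 0 := by
    simp only [Matrix.det_fin_two, Matrix.sub_apply, Matrix.smul_apply, Matrix.one_apply,
      smul_eq_mul]
    norm_num
    linear_combination hprod' - b * hsum'
  obtain ⟨va, hva0, hva⟩ := heig a hdeta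
  obtain ⟨vb, hvb0, hvb⟩ := heig b hdetb
  have hpowvec : ∀ (x : GaloisField p (2 * n)) (v : Fin 2 → GaloisField p (2 * n)),
      G *ᵥ v = x • v → ∀ m : ℕ, (G ^ m) *ᵥ v = x ^ m • v := by
    intro x v hv m
    induction m with
    | zero => simp
    | succ m ih =>
      rw [pow_succ, ← Matrix.mulVec_mulVec, hv, Matrix.mulVec_smul, ih, smul_smul,
        ← pow_succ']
  -- forward direction
  have hfwd : ∀ (m : ℕ) (c : GaloisField p (2 * n)),
      G ^ m = c • (1 : Matrix (Fin 2) (Fin 2) (GaloisField p (2 * n))) → a ^ m = b ^ m := by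
    intro m c hc
    have h1 : (G ^ m) *ᵥ va = a ^ m • va := hpowvec a va hva m
    have h2 : (G ^ m) *ᵥ vb = b ^ m • vb := hpowvec b vb hvb m
    rw [hc, Matrix.smul_mulVec, Matrix.one_mulVec] at h1 h2
    obtain ⟨i, hi⟩ := Function.ne_iff.mp hva0
    obtain ⟨j, hj⟩ := Function.ne_iff.mp hvb0
    have hca : c = a ^ m := by
      have h3 := congrFun h1 i
      simp only [Pi.smul_apply, smul_eq_mul] at h3
      exact mul_right_cancel₀ (by simpa using hi) h3
    have hcb : c = b ^ m := by
      have h3 := congrFun h2 j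
      simp only [Pi.smul_apply, smul_eq_mul] at h3
      exact mul_right_cancel₀ (by simpa using hj) h3
    rw [← hca, ← hcb]
  -- backward direction
  have hbwd : ∀ m : ℕ, a ^ m = b ^ m →
      G ^ m = a ^ m • (1 : Matrix (Fin 2) (Fin 2) (GaloisField p (2 * n))) := by
    intro m hm
    have hcop : IsCoprime (X - C a) (X - C b) :=
      isCoprime_X_sub_C_of_isUnit_sub (IsUnit.mk0 _ (sub_ne_zero_of_ne hab))
    have hdvd : (X - C a) * (X - C b) ∣ (X ^ m - C (a ^ m)) := by
      apply hcop.mul_dvd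
      · rw [dvd_iff_isRoot]
        simp [Polynomial.IsRoot]
      · rw [dvd_iff_isRoot]
        simp [Polynomial.IsRoot, hm]
    obtain ⟨q, hq⟩ := hdvd
    have hae := congrArg (aeval G) hq
    simp only [map_sub, _root_.map_mul, map_pow, aeval_X, aeval_C,
      Algebra.algebraMap_eq_smul_one] at hae
    rw [hCH, zero_mul, sub_eq_zero, _root_.smul_pow, one_pow] at hae
    exact hae
  -- the membership characterization
  have hmem : ∀ m : ℕ, (0 < m ∧ ∃ c : GaloisField p (2 * n),
      G ^ m = c • (1 : Matrix (Fin 2) (Fin 2) (GaloisField p (2 * n)))) ↔ (0 < m ∧ D' ∣ m) := by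
    intro m
    constructor
    · rintro ⟨h0, c, hc⟩
      exact ⟨h0, (habm m).mp (hfwd m c hc)⟩
    · rintro ⟨h0, hdv⟩
      exact ⟨h0, a ^ m, hbwd m ((habm m).mpr hdv)⟩
  have hInf : sInf {m : ℕ | 0 < m ∧ ∃ c : GaloisField p (2 * n),
      G ^ m = c • (1 : Matrix (Fin 2) (Fin 2) (GaloisField p (2 * n)))} = D' := by
    have hmemD' : D' ∈ {m : ℕ | 0 < m ∧ ∃ c : GaloisField p (2 * n),
        G ^ m = c • (1 : Matrix (Fin 2) (Fin 2) (GaloisField p (2 * n)))} :=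
      (hmem D').mpr ⟨hD'0, dvd_rfl⟩
    refine le_antisymm (Nat.sInf_le hmemD') ?_
    have h1 := Nat.sInf_mem (⟨D', hmemD'⟩ : Set.Nonempty {m : ℕ | 0 < m ∧
      ∃ c : GaloisField p (2 * n),
        G ^ m = c • (1 : Matrix (Fin 2) (Fin 2) (GaloisField p (2 * n)))})
    obtain ⟨hpos, hdvd⟩ := (hmem _).mp h1
    exact Nat.le_of_dvd hpos hdvd
  rw [hInf]
  constructor
  · intro h
    rcases Nat.div_eq_self.mp h with h' | h'
    · omega
    · exact h'
  · intro h
    rw [hD', h, Nat.div_one]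
end
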